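/- Let H₁, H₂ be nonzero complex Hilbert spaces and let T ∈ B(H₂, H₁) with ‖T‖ ≤ 1. The Hilbert T₂-module H₁ ⊕ H₂ given by π_{(H₁,H₂,T)} is a semicogenerator if and only if T is not injective. -/

import Mathlib

set_option synthInstance.maxHeartbeats 1000000
set_option maxHeartbeats 2000000

noncomputable section

open Filter

open scoped ENNReal Matrix.Norms.L2Operator

variable (A : Type) [NonUnitalNormedRing A] [NormedSpace ℂ A]

/-- A Hilbert `A`-module structure on the Hilbert space `K`: a contractive algebra
homomorphism `π : A → B(K)` which is nondegenerate, i.e. the linear span of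
`{π a x : a ∈ A, x ∈ K}` is dense in `K`. -/
def IsHilbertRep {K : Type} [NormedAddCommGroup K] [InnerProductSpace ℂ K] [CompleteSpace K]
    (π : A →ₙₐ[ℂ] (K →L[ℂ] K)) : Prop :=
  (∀ a : A, ‖π a‖ ≤ ‖a‖) ∧
  Dense ((Submodule.span ℂ {x : K | ∃ (a : A) (y : K), π a y = x} : Submodule ℂ K) : Set K)

/-- A bounded `A`-module map between Hilbert `A`-modules. -/
def IsModuleMap {K L : Type} [NormedAddCommGroup K] [InnerProductSpace ℂ K]
    [NormedAddCommGroup L] [InnerProductSpace ℂ L]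
    (πK : A →ₙₐ[ℂ] (K →L[ℂ] K)) (πL : A →ₙₐ[ℂ] (L →L[ℂ] L)) (T : K →L[ℂ] L) : Prop :=
  ∀ (a : A) (x : K), T (πK a x) = πL a (T x)

/-- `H` is a semicogenerator: for every nonzero Hilbert `A`-module `K` there is a nonzero
bounded `A`-module map `K → H`. -/
def IsSemicogenerator {H : Type} [NormedAddCommGroup H] [InnerProductSpace ℂ H] [CompleteSpace H]
    (πH : A →ₙₐ[ℂ] (H →L[ℂ] H)) : Prop :=
  ∀ (K : Type) [NormedAddCommGroup K] [InnerProductSpace ℂ K] [CompleteSpace K],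
    ∀ (πK : A →ₙₐ[ℂ] (K →L[ℂ] K)), IsHilbertRep A πK → Nontrivial K →
      ∃ V : K →L[ℂ] H, IsModuleMap A πK πH V ∧ V ≠ 0

/-- The algebra of upper triangular `2 × 2` complex matrices, normed as operators
on the Euclidean space `ℂ²` (the `L²` operator norm). -/
def T2 : Subalgebra ℂ (Matrix (Fin 2) (Fin 2) ℂ) where
  carrier := {M | M 1 0 = 0}
  mul_mem' := by
    intro a b ha hb
    simp only [Set.mem_setOf_eq] at *
    simp [Matrix.mul_apply, Fin.sum_univ_two, ha, hb]
  add_mem' := by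
    intro a b ha hb
    simp only [Set.mem_setOf_eq] at *
    simp [ha, hb]
  algebraMap_mem' := by
    intro c
    simp [Matrix.algebraMap_eq_diagonal]

/-- The operator `(ζ, η) ↦ (a • ζ + b • (T η), c • η)` on `H₁ × H₂`. -/
def blockOp {H₁ H₂ : Type} [NormedAddCommGroup H₁] [InnerProductSpace ℂ H₁]
    [NormedAddCommGroup H₂] [InnerProductSpace ℂ H₂]
    (T : H₂ →L[ℂ] H₁) (a b c : ℂ) : (H₁ × H₂) →L[ℂ] (H₁ × H₂) :=
  (a • ContinuousLinearMap.fst ℂ H₁ H₂ +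
    b • T.comp (ContinuousLinearMap.snd ℂ H₁ H₂)).prod
    (c • ContinuousLinearMap.snd ℂ H₁ H₂)

variable {H₁ H₂ : Type} [NormedAddCommGroup H₁] [InnerProductSpace ℂ H₁]
  [NormedAddCommGroup H₂] [InnerProductSpace ℂ H₂]

theorem blockOp_apply (T : H₂ →L[ℂ] H₁) (a b c : ℂ) (x : H₁ × H₂) :
    blockOp T a b c x = (a • x.1 + b • T x.2, c • x.2) := rfl

theorem blockOp_mul (T : H₂ →L[ℂ] H₁) (a b c a' b' c' : ℂ) :
    (blockOp T a b c).comp (blockOp T a' b' c') =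
      blockOp T (a * a') (a * b' + b * c') (c * c') := by
  refine ContinuousLinearMap.ext fun x => Prod.ext ?_ ?_
  · simp [blockOp_apply, smul_smul, smul_add, add_smul]
    abel
  · simp [blockOp_apply, smul_smul]

theorem blockOp_add (T : H₂ →L[ℂ] H₁) (a b c a' b' c' : ℂ) :
    blockOp T (a + a') (b + b') (c + c') = blockOp T a b c + blockOp T a' b' c' := by
  refine ContinuousLinearMap.ext fun x => Prod.ext ?_ ?_
  · simp [blockOp_apply, add_smul]
    abel
  · simp [blockOp_apply, add_smul]

theorem blockOp_smul (T : H₂ →L[ℂ] H₁) (s a b c : ℂ) :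
    blockOp T (s * a) (s * b) (s * c) = s • blockOp T a b c := by
  refine ContinuousLinearMap.ext fun x => Prod.ext ?_ ?_
  · simp [blockOp_apply, smul_smul, smul_add]
  · simp [blockOp_apply, smul_smul]

theorem blockOp_zero (T : H₂ →L[ℂ] H₁) : blockOp T 0 0 0 = 0 := by
  refine ContinuousLinearMap.ext fun x => Prod.ext ?_ ?_ <;> simp [blockOp_apply]

/-- Conjugation of an operator on `H₁ × H₂` to the `L²`-direct sum `WithLp 2 (H₁ × H₂)`. -/
def prodL2Conj (X : (H₁ × H₂) →L[ℂ] (H₁ × H₂)) :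
    WithLp 2 (H₁ × H₂) →L[ℂ] WithLp 2 (H₁ × H₂) :=
  ((WithLp.prodContinuousLinearEquiv 2 ℂ H₁ H₂).symm.toContinuousLinearMap.comp X).comp
    (WithLp.prodContinuousLinearEquiv 2 ℂ H₁ H₂).toContinuousLinearMap

theorem prodL2Conj_add (X Y : (H₁ × H₂) →L[ℂ] (H₁ × H₂)) :
    prodL2Conj (X + Y) = prodL2Conj X + prodL2Conj Y := by
  unfold prodL2Conj
  rw [ContinuousLinearMap.comp_add, ContinuousLinearMap.add_comp]

theorem prodL2Conj_smul (s : ℂ) (X : (H₁ × H₂) →L[ℂ] (H₁ × H₂)) :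
    prodL2Conj (s • X) = s • prodL2Conj X := by
  unfold prodL2Conj
  rw [ContinuousLinearMap.comp_smul, ContinuousLinearMap.smul_comp]

theorem prodL2Conj_zero : prodL2Conj (0 : (H₁ × H₂) →L[ℂ] (H₁ × H₂)) = 0 := by
  unfold prodL2Conj
  rw [ContinuousLinearMap.comp_zero, ContinuousLinearMap.zero_comp]

theorem prodL2Conj_mul (X Y : (H₁ × H₂) →L[ℂ] (H₁ × H₂)) :
    prodL2Conj X * prodL2Conj Y = prodL2Conj (X.comp Y) := by
  ext x <;> simp [prodL2Conj, ContinuousLinearMap.mul_apply]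

/-- The representation `π_{(H₁,H₂,T)}` of `T2` on the Hilbert space direct sum `H₁ ⊕ H₂`
determined by a contraction `T : H₂ → H₁`: the upper triangular matrix `[[a, b], [0, c]]`
acts by `(ζ, η) ↦ (a ζ + b (T η), c η)`. -/
def triRep (T : H₂ →L[ℂ] H₁) :
    ↥T2 →ₙₐ[ℂ] (WithLp 2 (H₁ × H₂) →L[ℂ] WithLp 2 (H₁ × H₂)) where
  toFun M := prodL2Conj (blockOp T ((M : Matrix (Fin 2) (Fin 2) ℂ) 0 0)
    ((M : Matrix (Fin 2) (Fin 2) ℂ) 0 1) ((M : Matrix (Fin 2) (Fin 2) ℂ) 1 1))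
  map_add' M N := by
    have h : ((M + N : ↥T2) : Matrix (Fin 2) (Fin 2) ℂ)
        = (M : Matrix (Fin 2) (Fin 2) ℂ) + (N : Matrix (Fin 2) (Fin 2) ℂ) := rfl
    simp only [h, Matrix.add_apply, blockOp_add, prodL2Conj_add]
  map_smul' s M := by
    have h : ((s • M : ↥T2) : Matrix (Fin 2) (Fin 2) ℂ)
        = s • (M : Matrix (Fin 2) (Fin 2) ℂ) := rfl
    simp only [h, Matrix.smul_apply, smul_eq_mul, blockOp_smul, prodL2Conj_smul,
      RingHom.id_apply, MonoidHom.id_apply]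
  map_zero' := by
    have h : ((0 : ↥T2) : Matrix (Fin 2) (Fin 2) ℂ) = 0 := rfl
    simp only [h, Matrix.zero_apply, blockOp_zero, prodL2Conj_zero]
  map_mul' M N := by
    have hM : (M : Matrix (Fin 2) (Fin 2) ℂ) 1 0 = 0 := M.2
    have hN : (N : Matrix (Fin 2) (Fin 2) ℂ) 1 0 = 0 := N.2
    have hMN : ((M * N : ↥T2) : Matrix (Fin 2) (Fin 2) ℂ)
        = (M : Matrix (Fin 2) (Fin 2) ℂ) * (N : Matrix (Fin 2) (Fin 2) ℂ) := rfl
    have e00 : ((M * N : ↥T2) : Matrix (Fin 2) (Fin 2) ℂ) 0 0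
        = (M : Matrix (Fin 2) (Fin 2) ℂ) 0 0 * (N : Matrix (Fin 2) (Fin 2) ℂ) 0 0 := by
      simp [hMN, Matrix.mul_apply, Fin.sum_univ_two, hN]
    have e01 : ((M * N : ↥T2) : Matrix (Fin 2) (Fin 2) ℂ) 0 1
        = (M : Matrix (Fin 2) (Fin 2) ℂ) 0 0 * (N : Matrix (Fin 2) (Fin 2) ℂ) 0 1
          + (M : Matrix (Fin 2) (Fin 2) ℂ) 0 1 * (N : Matrix (Fin 2) (Fin 2) ℂ) 1 1 := by
      simp [hMN, Matrix.mul_apply, Fin.sum_univ_two]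
    have e11 : ((M * N : ↥T2) : Matrix (Fin 2) (Fin 2) ℂ) 1 1
        = (M : Matrix (Fin 2) (Fin 2) ℂ) 1 1 * (N : Matrix (Fin 2) (Fin 2) ℂ) 1 1 := by
      simp [hMN, Matrix.mul_apply, Fin.sum_univ_two, hM]
    simp only [e00, e01, e11, ← blockOp_mul, ← prodL2Conj_mul]


/-! A nonzero module map into `H₁ ⊕ H₂` from the one-dimensional module `ℂ` on which `T2` acts
through its lower diagonal entry sends `1` to a vector `(0, η)` with `T η = 0`, so a
semicogenerator forces `T` to have a kernel. Conversely, a nonzero Hilbert `T2`-module `K`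
carries an operator `P ≠ 0` with `P π(M) = M i i • P` for a fixed diagonal index `i`: `π(E22)`
if it is nonzero, and otherwise `π(1)`, since then `T2` acts through its upper diagonal entry.
Then `x ↦ ⟪P x₀, P x⟫ • w` is a nonzero module map for the eigenvector `w = (ξ, 0)` when
`i = 0`, and `w = (0, η)` with `T η = 0` when `i = 1`. -/

theorem Matrix.norm_entry_le_l2_opNorm {𝕜 m n : Type*} [RCLike 𝕜] [Fintype m] [Fintype n]
    [DecidableEq n] (M : Matrix m n 𝕜) (i : m) (j : n) : ‖M i j‖ ≤ ‖M‖ := by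
  have h := M.l2_opNorm_mulVec (EuclideanSpace.single j 1)
  rw [PiLp.norm_single, norm_one, mul_one] at h
  refine le_trans (le_of_eq ?_) ((PiLp.norm_apply_le _ i).trans h)
  simp

section Representations

variable {A} {K L : Type} [NormedAddCommGroup K] [InnerProductSpace ℂ K]
  [NormedAddCommGroup L] [InnerProductSpace ℂ L]

theorem IsHilbertRep.ne_zero [CompleteSpace K] [Nontrivial K] {π : A →ₙₐ[ℂ] (K →L[ℂ] K)}
    (hπ : IsHilbertRep A π) : π ≠ 0 := by
  rintro rfl
  have hspan : Submodule.span ℂ {x : K | ∃ (a : A) (y : K), (0 : A →ₙₐ[ℂ] (K →L[ℂ] K)) a y = x}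
      = ⊥ := by
    rw [Submodule.span_eq_bot]
    rintro _ ⟨a, y, rfl⟩
    rfl
  have hdense := hπ.2
  rw [hspan, Submodule.bot_coe, dense_iff_closure_eq, closure_singleton] at hdense
  obtain ⟨x, hx⟩ := exists_ne (0 : K)
  exact hx (hdense ▸ Set.mem_univ x : x ∈ ({0} : Set K))

def scalarRep (χ : A →ₙₐ[ℂ] ℂ) : A →ₙₐ[ℂ] (ℂ →L[ℂ] ℂ) :=
  (Algebra.ofId ℂ (ℂ →L[ℂ] ℂ)).toNonUnitalAlgHom.comp χ

theorem scalarRep_apply (χ : A →ₙₐ[ℂ] ℂ) (a : A) (z : ℂ) : scalarRep χ a z = χ a * z := rfl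

theorem isHilbertRep_scalarRep (χ : A →ₙₐ[ℂ] ℂ) (hχ : ∀ a, ‖χ a‖ ≤ ‖a‖) (a₀ : A)
    (ha₀ : χ a₀ ≠ 0) : IsHilbertRep A (scalarRep χ) := by
  refine ⟨fun a => ?_, ?_⟩
  · refine ContinuousLinearMap.opNorm_le_bound _ (norm_nonneg a) fun z => ?_
    rw [scalarRep_apply, norm_mul]
    gcongr
    exact hχ a
  · have hspan : {x : ℂ | ∃ (a : A) (y : ℂ), scalarRep χ a y = x} = Set.univ :=
      Set.eq_univ_of_forall fun z => ⟨a₀, z / χ a₀, by rw [scalarRep_apply, mul_div_cancel₀ _ ha₀]⟩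
    rw [hspan, Submodule.span_univ, Submodule.top_coe]
    exact dense_univ

theorem IsModuleMap.scalarRep_apply_one {χ : A →ₙₐ[ℂ] ℂ} {πL : A →ₙₐ[ℂ] (L →L[ℂ] L)}
    {V : ℂ →L[ℂ] L} (hV : IsModuleMap A (scalarRep χ) πL V) (a : A) :
    πL a (V 1) = χ a • V 1 := by
  rw [← hV, scalarRep_apply, mul_one, ← map_smul, smul_eq_mul, mul_one]

theorem isModuleMap_smulRight {χ : A → ℂ} {πK : A →ₙₐ[ℂ] (K →L[ℂ] K)}
    {πL : A →ₙₐ[ℂ] (L →L[ℂ] L)} {φ : K →L[ℂ] ℂ} {w : L}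
    (hφ : ∀ a x, φ (πK a x) = χ a * φ x) (hw : ∀ a, πL a w = χ a • w) :
    IsModuleMap A πK πL (φ.smulRight w) := by
  intro a x
  simp only [ContinuousLinearMap.smulRight_apply, hφ, map_smul, hw, smul_smul, mul_comm]

theorem exists_ne_zero_functional_intertwining {ι : Type*} {S : ι → K →L[ℂ] K} {χ : ι → ℂ}
    {P : K →L[ℂ] K} (hP : P ≠ 0) (hPS : ∀ i, P ∘L S i = χ i • P) :
    ∃ φ : K →L[ℂ] ℂ, φ ≠ 0 ∧ ∀ i x, φ (S i x) = χ i * φ x := by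
  obtain ⟨x₀, hx₀⟩ : ∃ x₀, P x₀ ≠ 0 := by
    by_contra! h
    exact hP (ContinuousLinearMap.ext h)
  refine ⟨innerSL ℂ (P x₀) ∘L P, fun hφ => hx₀ ?_, fun i x => ?_⟩
  · simpa using congr($hφ x₀)
  · simp [← ContinuousLinearMap.comp_apply P (S i), hPS]

theorem exists_isModuleMap_ne_zero {χ : A → ℂ} {πK : A →ₙₐ[ℂ] (K →L[ℂ] K)}
    {πL : A →ₙₐ[ℂ] (L →L[ℂ] L)} {P : K →L[ℂ] K} (hP : P ≠ 0)
    (hPπ : ∀ a, P ∘L πK a = χ a • P) {w : L} (hw₀ : w ≠ 0) (hw : ∀ a, πL a w = χ a • w) :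
    ∃ V : K →L[ℂ] L, IsModuleMap A πK πL V ∧ V ≠ 0 := by
  obtain ⟨φ, hφ₀, hφ⟩ := exists_ne_zero_functional_intertwining hP hPπ
  refine ⟨φ.smulRight w, isModuleMap_smulRight hφ hw, fun hV => ?_⟩
  obtain ⟨x, hx⟩ : ∃ x, φ x ≠ 0 := by
    by_contra! h
    exact hφ₀ (ContinuousLinearMap.ext h)
  exact smul_ne_zero hx hw₀ congr($hV x)

end Representations

namespace T2

theorem entry_one_zero (M : ↥T2) : (M : Matrix (Fin 2) (Fin 2) ℂ) 1 0 = 0 := M.2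

def diagChar (i : Fin 2) : ↥T2 →ₙₐ[ℂ] ℂ where
  toFun M := (M : Matrix (Fin 2) (Fin 2) ℂ) i i
  map_add' _ _ := rfl
  map_smul' _ _ := rfl
  map_zero' := rfl
  map_mul' M N := by
    fin_cases i <;>
      simp [Matrix.mul_apply, Fin.sum_univ_two, entry_one_zero]

theorem diagChar_apply (i : Fin 2) (M : ↥T2) :
    diagChar i M = (M : Matrix (Fin 2) (Fin 2) ℂ) i i := rfl

theorem norm_diagChar_le (i : Fin 2) (M : ↥T2) : ‖diagChar i M‖ ≤ ‖M‖ :=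
  Matrix.norm_entry_le_l2_opNorm _ i i

theorem diagChar_one (i : Fin 2) : diagChar i 1 = 1 := by
  simp [diagChar_apply]

def E11 : ↥T2 := ⟨!![1, 0; 0, 0], rfl⟩
def E12 : ↥T2 := ⟨!![0, 1; 0, 0], rfl⟩
def E22 : ↥T2 := ⟨!![0, 0; 0, 1], rfl⟩

theorem E11_add_E22 : E11 + E22 = 1 := by
  ext i j
  fin_cases i <;> fin_cases j <;> simp [E11, E22]

theorem mul_E11 (M : ↥T2) : M * E11 = diagChar 0 M • E11 := by
  ext i j
  fin_cases i <;> fin_cases j <;>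
    simp [E11, diagChar_apply, Matrix.mul_apply, Fin.sum_univ_two, entry_one_zero]

theorem E22_mul (M : ↥T2) : E22 * M = diagChar 1 M • E22 := by
  ext i j
  fin_cases i <;> fin_cases j <;>
    simp [E22, diagChar_apply, Matrix.mul_apply, Fin.sum_univ_two, entry_one_zero]

theorem exists_ne_zero_comp_eq_diagChar_smul {K : Type} [NormedAddCommGroup K]
    [InnerProductSpace ℂ K] {π : ↥T2 →ₙₐ[ℂ] (K →L[ℂ] K)} (hπ : π ≠ 0) :
    ∃ i, ∃ P : K →L[ℂ] K, P ≠ 0 ∧ ∀ M, P ∘L π M = diagChar i M • P := by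
  by_cases h22 : π E22 = 0
  · have hπM : ∀ M, π M = diagChar 0 M • π 1 := fun M => calc
      π M = π (M * (E11 + E22)) := by rw [E11_add_E22, mul_one]
      _ = diagChar 0 M • π E11 := by
        rw [mul_add, map_add, map_mul π M E22, h22, mul_zero, add_zero, mul_E11, map_smul]
      _ = diagChar 0 M • π 1 := by rw [← E11_add_E22, map_add, h22, add_zero]
    refine ⟨0, π 1, fun h1 => hπ ?_, fun M => ?_⟩
    · ext M : 1
      rw [hπM, h1, smul_zero]
      rfl
    · rw [← ContinuousLinearMap.mul_def, ← map_mul, one_mul, hπM]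
  · exact ⟨1, π E22, h22, fun M => by
      rw [← ContinuousLinearMap.mul_def, ← map_mul, E22_mul, map_smul]⟩

end T2

theorem triRep_apply (T : H₂ →L[ℂ] H₁) (M : ↥T2) (x : WithLp 2 (H₁ × H₂)) :
    triRep T M x = WithLp.toLp 2 ((M : Matrix (Fin 2) (Fin 2) ℂ) 0 0 • x.fst +
      (M : Matrix (Fin 2) (Fin 2) ℂ) 0 1 • T x.snd, (M : Matrix (Fin 2) (Fin 2) ℂ) 1 1 • x.snd) :=
  rfl

theorem triRep_apply_toLp_zero_right (T : H₂ →L[ℂ] H₁) (ξ : H₁) (M : ↥T2) :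
    triRep T M (WithLp.toLp 2 (ξ, 0)) = T2.diagChar 0 M • WithLp.toLp 2 (ξ, 0) := by
  refine WithLp.ofLp_injective 2 (Prod.ext ?_ ?_) <;> simp [triRep_apply, T2.diagChar_apply]

theorem triRep_eq_diagChar_one_smul_iff (T : H₂ →L[ℂ] H₁) (w : WithLp 2 (H₁ × H₂)) :
    (∀ M, triRep T M w = T2.diagChar 1 M • w) ↔ w.fst = 0 ∧ T w.snd = 0 := by
  refine ⟨fun h => ⟨?_, ?_⟩, fun ⟨h₁, h₂⟩ M => ?_⟩
  · simpa [triRep_apply, T2.diagChar_apply, T2.E11] using congr(($(h T2.E11)).fst)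
  · simpa [triRep_apply, T2.diagChar_apply, T2.E12] using congr(($(h T2.E12)).fst)
  · refine WithLp.ofLp_injective 2 (Prod.ext ?_ rfl)
    simp [triRep_apply, h₁, h₂]

theorem exists_triRep_eigenvector [Nontrivial H₁] {T : H₂ →L[ℂ] H₁}
    (hT : ¬Function.Injective T) (i : Fin 2) :
    ∃ w : WithLp 2 (H₁ × H₂), w ≠ 0 ∧ ∀ M, triRep T M w = T2.diagChar i M • w := by
  fin_cases i
  · obtain ⟨ξ, hξ⟩ := exists_ne (0 : H₁)
    exact ⟨WithLp.toLp 2 (ξ, 0), fun h => hξ congr(($h).fst), triRep_apply_toLp_zero_right T ξ⟩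
  · obtain ⟨η, hη, hTη⟩ : ∃ η, η ≠ 0 ∧ T η = 0 := by
      simpa [injective_iff_map_eq_zero, and_comm] using hT
    exact ⟨WithLp.toLp 2 (0, η), fun h => hη congr(($h).snd),
      (triRep_eq_diagChar_one_smul_iff T _).2 ⟨rfl, hTη⟩⟩

theorem triRep_semicogenerator_iff_general [CompleteSpace H₁] [CompleteSpace H₂]
    [Nontrivial H₁]
    (T : H₂ →L[ℂ] H₁) :
    IsSemicogenerator ↥T2 (triRep T) ↔ ¬Function.Injective ⇑T := by
  constructor
  · intro hsemi hinj
    have hχ : IsHilbertRep ↥T2 (scalarRep (T2.diagChar 1)) :=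
      isHilbertRep_scalarRep _ (T2.norm_diagChar_le 1) 1 (by simp [T2.diagChar_one])
    obtain ⟨V, hV, hV₀⟩ := hsemi ℂ _ hχ inferInstance
    obtain ⟨h₁, h₂⟩ := (triRep_eq_diagChar_one_smul_iff T (V 1)).1 hV.scalarRep_apply_one
    have hsnd : (V 1).snd = 0 := hinj (h₂.trans (map_zero T).symm)
    exact hV₀ (ContinuousLinearMap.ext_ring (WithLp.ofLp_injective 2 (Prod.ext h₁ hsnd)))
  · intro hT K _ _ _ πK hπK _
    obtain ⟨i, P, hP, hPπ⟩ := T2.exists_ne_zero_comp_eq_diagChar_smul hπK.ne_zero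
    obtain ⟨w, hw₀, hw⟩ := exists_triRep_eigenvector hT i
    exact exists_isModuleMap_ne_zero hP hPπ hw₀ hw

/-- The Hilbert `T2`-module `H₁ ⊕ H₂` given by `π_(H₁,H₂,T)` is a semicogenerator if and only if `T` is not injective. -/
theorem triRep_semicogenerator_iff [CompleteSpace H₁] [CompleteSpace H₂]
    [Nontrivial H₁] [Nontrivial H₂]
    (T : H₂ →L[ℂ] H₁) (hT : ‖T‖ ≤ 1) :
    IsSemicogenerator ↥T2 (triRep T) ↔ ¬Function.Injective ⇑T :=
  triRep_semicogenerator_iff_general T
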